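/- Let (I, ≤) be a directed preorder and (X_i, f_{ji}) a regular directed system of topological spaces over (I, ≤). If every X_i is a T₀ (Kolmogorov) space, then the direct limit X_∞ is a T₀ space. -/

import Mathlib

universe u v

/-- A directed system of topological spaces over a preorder `I`:
spaces `X i` with continuous transition maps `map i j : X i → X j` for `i ≤ j`,
satisfying the identity and composition laws. -/
structure TopDirectedSystem (I : Type u) [Preorder I] : Type (max u (v + 1)) where
  X : I → Type v
  top : ∀ i, TopologicalSpace (X i)
  map : ∀ i j, i ≤ j → X i → X j
  map_continuous : ∀ i j (h : i ≤ j), Continuous (map i j h)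
  map_id : ∀ i (x : X i), map i i le_rfl x = x
  map_comp : ∀ i j k (hij : i ≤ j) (hjk : j ≤ k) (x : X i),
    map j k hjk (map i j hij x) = map i k (hij.trans hjk) x

attribute [instance] TopDirectedSystem.top

namespace TopDirectedSystem

variable {I : Type u} [Preorder I] (S : TopDirectedSystem.{u, v} I)

/-- The relation on the disjoint union: `⟨i, x⟩ ∼ ⟨j, y⟩` iff there is `k ≥ i, j`
with `f_{ki} x = f_{kj} y`. -/
def Rel (p q : Σ i, S.X i) : Prop :=
  ∃ (k : I) (hik : p.1 ≤ k) (hjk : q.1 ≤ k), S.map p.1 k hik p.2 = S.map q.1 k hjk q.2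

/-- The direct limit: the quotient of the disjoint union (with the disjoint union
topology) by `Rel`, carrying the quotient topology. -/
def Limit : Type (max u v) := Quot S.Rel

instance : TopologicalSpace S.Limit :=
  inferInstanceAs (TopologicalSpace (Quot S.Rel))

/-- The canonical map `f_{*i} : X i → X_∞`. -/
def ι (i : I) (x : S.X i) : S.Limit :=
  Quot.mk S.Rel ⟨i, x⟩

/-- A directed system is regular if all transition maps are injective
(continuous) open maps. -/
def Regular : Prop :=
  ∀ i j (h : i ≤ j), Function.Injective (S.map i j h) ∧ IsOpenMap (S.map i j h)

end TopDirectedSystem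

/-!
Any two points of the direct limit come from a single stage `X k`, by directedness. For a
regular system each canonical map `f_{*k}` is an open embedding, so two points of its image are
topologically inseparable in `X_∞` only if their preimages are inseparable in `X k`, hence equal.
-/

open Topology

namespace TopDirectedSystem

variable {I : Type u} [Preorder I] (S : TopDirectedSystem.{u, v} I)

lemma ι_map (i k : I) (hik : i ≤ k) (x : S.X i) : S.ι k (S.map i k hik x) = S.ι i x :=
  Quot.sound ⟨k, le_rfl, hik, by rw [S.map_id]⟩

lemma continuous_ι (i : I) : Continuous (S.ι i) :=
  continuous_quot_mk.comp continuous_sigmaMk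

section Directed

variable [IsDirected I (· ≤ ·)]

lemma equivalence_rel : Equivalence S.Rel where
  refl p := ⟨p.1, le_rfl, le_rfl, rfl⟩
  symm := fun ⟨k, hpk, hqk, e⟩ => ⟨k, hqk, hpk, e.symm⟩
  trans := by
    rintro p q r ⟨k, hpk, hqk, e₁⟩ ⟨m, hqm, hrm, e₂⟩
    obtain ⟨n, hkn, hmn⟩ := directed_of (· ≤ ·) k m
    refine ⟨n, hpk.trans hkn, hrm.trans hmn, ?_⟩
    rw [← S.map_comp _ k _ hpk hkn, e₁, S.map_comp, ← S.map_comp _ m _ hqm hmn, e₂, S.map_comp]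

lemma ι_eq_iff {i j : I} {x : S.X i} {y : S.X j} :
    S.ι i x = S.ι j y ↔ ∃ (k : I) (hik : i ≤ k) (hjk : j ≤ k), S.map i k hik x = S.map j k hjk y :=
  Quot.eq.trans S.equivalence_rel.eqvGen_iff

lemma exists_ι_eq_and_ι_eq (a b : S.Limit) :
    ∃ (k : I) (x y : S.X k), S.ι k x = a ∧ S.ι k y = b := by
  induction a using Quot.ind with | mk p => ?_
  induction b using Quot.ind with | mk q => ?_
  obtain ⟨k, hik, hjk⟩ := directed_of (· ≤ ·) p.1 q.1
  exact ⟨k, S.map p.1 k hik p.2, S.map q.1 k hjk q.2, S.ι_map .., S.ι_map ..⟩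

variable {S}

lemma injective_ι (hreg : S.Regular) (i : I) : Function.Injective (S.ι i) := fun _ _ hxy =>
  let ⟨k, hik, _, e⟩ := S.ι_eq_iff.mp hxy
  (hreg i k hik).1 e

lemma isOpenMap_ι (hreg : S.Regular) (i : I) : IsOpenMap (S.ι i) := by
  intro U hU
  change IsOpen (Quot.mk S.Rel ⁻¹' (S.ι i '' U))
  rw [isOpen_sigma_iff]
  intro j
  have preimage_eq : Sigma.mk j ⁻¹' (Quot.mk S.Rel ⁻¹' (S.ι i '' U))
      = ⋃ (m : I) (hjm : j ≤ m) (him : i ≤ m), S.map j m hjm ⁻¹' (S.map i m him '' U) := by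
    ext y
    simp only [Set.mem_preimage, Set.mem_image, Set.mem_iUnion]
    constructor
    · rintro ⟨x, hx, hxy⟩
      obtain ⟨m, him, hjm, e⟩ := S.ι_eq_iff.mp hxy
      exact ⟨m, hjm, him, x, hx, e⟩
    · rintro ⟨m, hjm, him, x, hx, e⟩
      exact ⟨x, hx, S.ι_eq_iff.mpr ⟨m, him, hjm, e⟩⟩
  rw [preimage_eq]
  exact isOpen_iUnion fun m => isOpen_iUnion fun hjm => isOpen_iUnion fun him =>
    (S.map_continuous j m hjm).isOpen_preimage _ ((hreg i m him).2 U hU)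

lemma isOpenEmbedding_ι (hreg : S.Regular) (i : I) : IsOpenEmbedding (S.ι i) :=
  .of_continuous_injective_isOpenMap (S.continuous_ι i) (injective_ι hreg i) (isOpenMap_ι hreg i)

end Directed

end TopDirectedSystem

theorem limit_t0_general {I : Type u} [Preorder I] [IsDirected I (· ≤ ·)]
    (S : TopDirectedSystem.{u, v} I) (hreg : S.Regular) (h : ∀ i, T0Space (S.X i)) :
    T0Space S.Limit := by
  rw [t0Space_iff_inseparable]
  intro a b hab
  obtain ⟨k, x, y, rfl, rfl⟩ := S.exists_ι_eq_and_ι_eq a b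
  rw [(TopDirectedSystem.isOpenEmbedding_ι hreg k).isInducing.inseparable_iff] at hab
  rw [hab.eq]

/-- the direct limit of a regular directed system of T0Space
topological spaces is a T0Space. -/
theorem limit_t0 {I : Type u} [Preorder I] [Nonempty I] [IsDirected I (· ≤ ·)]
    (S : TopDirectedSystem.{u, v} I) (hreg : S.Regular) (h : ∀ i, T0Space (S.X i)) :
    T0Space S.Limit :=
  limit_t0_general S hreg h
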